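/- arXiv:1903.05165 — 7 statements merged into one kernel-verified Lean document; each statement's English description precedes it below -/
import Mathlib

section
/- Let φ ∈ (0, π/2], t = tan(φ/2), v_xy > 0 and v_z = t·v_xy. For every d = (d_x, d_y, d_z) ∈ ℝ³, the visibility-constrained planning heuristic admits the closed form h(d) = √( (max(ρ(d), |d_z|/t))² + d_z² ), where ρ(d) = √(d_x² + d_y²). In particular h(d) does not depend on the choice of v_xy. -/
/-- The visibility-constrained planning heuristic `h(d)` for sensor slope
parameter `t = tan(φ/2)` and voxel dimensions `v_xy`, `v_z`. -/
noncomputable def heur (t vxy vz dx dy dz : ℝ) : ℝ :=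
  Real.sqrt (dx ^ 2 + dy ^ 2 + (min |dz| (t * Real.sqrt (dx ^ 2 + dy ^ 2))) ^ 2) +
    max 0 (|dz| - min |dz| (t * Real.sqrt (dx ^ 2 + dy ^ 2))) / vz *
      Real.sqrt (vxy ^ 2 + vz ^ 2)

lemma heur_closed (t vxy dx dy dz : ℝ) (ht : 0 < t) (hv : 0 < vxy) :
    heur t vxy (t * vxy) dx dy dz =
      Real.sqrt ((max (Real.sqrt (dx ^ 2 + dy ^ 2)) (|dz| / t)) ^ 2 + dz ^ 2) := by
  have hρ0 : (0:ℝ) ≤ Real.sqrt (dx ^ 2 + dy ^ 2) := Real.sqrt_nonneg _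
  set ρ := Real.sqrt (dx ^ 2 + dy ^ 2) with hρ
  have hρsq : ρ ^ 2 = dx ^ 2 + dy ^ 2 := Real.sq_sqrt (by positivity)
  rcases le_or_gt |dz| (t * ρ) with h | h
  · have hmin : min |dz| (t * ρ) = |dz| := min_eq_left h
    have hmax : max ρ (|dz| / t) = ρ :=
      max_eq_left ((div_le_iff₀ ht).mpr (by linarith [mul_comm t ρ]))
    unfold heur
    rw [← hρ, hmin, hmax, hρsq, sq_abs]
    simp
  · have hmin : min |dz| (t * ρ) = t * ρ := min_eq_right h.le
    have hmax : max ρ (|dz| / t) = |dz| / t :=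
      max_eq_right (le_of_lt ((lt_div_iff₀ ht).mpr (by linarith [mul_comm ρ t])))
    unfold heur
    rw [← hρ, hmin, hmax]
    have h1 : Real.sqrt (dx ^ 2 + dy ^ 2 + (t * ρ) ^ 2) = ρ * Real.sqrt (1 + t ^ 2) := by
      rw [← hρsq]
      rw [show ρ ^ 2 + (t * ρ) ^ 2 = ρ ^ 2 * (1 + t ^ 2) by ring,
        Real.sqrt_mul (by positivity), Real.sqrt_sq hρ0]
    have h2 : Real.sqrt (vxy ^ 2 + (t * vxy) ^ 2) = vxy * Real.sqrt (1 + t ^ 2) := by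
      rw [show vxy ^ 2 + (t * vxy) ^ 2 = vxy ^ 2 * (1 + t ^ 2) by ring,
        Real.sqrt_mul (by positivity), Real.sqrt_sq hv.le]
    have h3 : Real.sqrt ((|dz| / t) ^ 2 + dz ^ 2) = |dz| / t * Real.sqrt (1 + t ^ 2) := by
      rw [show (|dz| / t) ^ 2 + dz ^ 2 = (|dz| / t) ^ 2 * (1 + t ^ 2) by
        rw [div_pow]; field_simp [sq_abs]; rw [sq_abs]; ring,
        Real.sqrt_mul (by positivity), Real.sqrt_sq (by positivity)]
    rw [h1, h2, h3, max_eq_right (by linarith : (0:ℝ) ≤ |dz| - t * ρ)]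
    field_simp
    ring

theorem stmt_2 (φ t vxy vz : ℝ) (hφ0 : 0 < φ) (hφ1 : φ ≤ Real.pi / 2)
    (ht : t = Real.tan (φ / 2)) (hvxy : 0 < vxy) (hvz : vz = t * vxy)
    (dx dy dz : ℝ) :
    heur t vxy vz dx dy dz =
      Real.sqrt ((max (Real.sqrt (dx ^ 2 + dy ^ 2)) (|dz| / t)) ^ 2 + dz ^ 2) ∧
    ∀ vxy' : ℝ, 0 < vxy' →
      heur t vxy' (t * vxy') dx dy dz = heur t vxy vz dx dy dz := by
  have ht0 : 0 < t := by
    rw [ht]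
    apply Real.tan_pos_of_pos_of_lt_pi_div_two (by linarith)
    linarith [Real.pi_pos]
  subst hvz
  refine ⟨heur_closed t vxy dx dy dz ht0 hvxy, fun vxy' hv' => ?_⟩
  rw [heur_closed t vxy' dx dy dz ht0 hv', heur_closed t vxy dx dy dz ht0 hvxy]
end

section
/- Let φ ∈ (0, π/2], t = tan(φ/2), v_xy > 0 and v_z = t·v_xy. For every d = (d_x, d_y, d_z) ∈ ℝ³, the visibility-constrained planning heuristic dominates the Euclidean distance: h(d) ≥ √(d_x² + d_y² + d_z²), with equality if and only if |d_z| ≤ t·√(d_x² + d_y²). -/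
/-
Below the visibility cone, `|d_z| ≤ t ρ`, no vertical excess is left and `h` is the Euclidean
distance. Above it, with `s = √(1 + t²)`, the cone part contributes `ρ s` and the excess
`|d_z| - t ρ` is paid at rate `√(v_xy² + v_z²) / v_z = s / t`, so `h = s |d_z| / t`; this beats
the Euclidean distance because `ρ² < d_z² / t²`.
-/

open Real

theorem tan_half_pos {φ : ℝ} (hφ0 : 0 < φ) (hφπ : φ < π) : 0 < tan (φ / 2) :=
  tan_pos_of_pos_of_lt_pi_div_two (by linarith) (by linarith)

theorem sqrt_sq_add_mul_sq {a t : ℝ} (ha : 0 ≤ a) : √(a ^ 2 + (t * a) ^ 2) = a * √(1 + t ^ 2) := by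
  rw [← sqrt_sq ha, ← sqrt_mul (sq_nonneg a), sqrt_sq ha]
  ring_nf

theorem sqrt_add_sq_lt_of_mul_lt {ρ z t : ℝ} (ht : 0 < t) (hρ : 0 ≤ ρ) (hz : t * ρ < z) :
    √(ρ ^ 2 + z ^ 2) < √(1 + t ^ 2) * z / t := by
  have hz0 : 0 < z := lt_of_le_of_lt (by positivity) hz
  rw [sqrt_lt' (by positivity), div_pow, mul_pow, sq_sqrt (by positivity),
    lt_div_iff₀ (by positivity)]
  nlinarith [mul_lt_mul'' hz hz (by positivity) (by positivity)]

theorem heur_of_abs_le (t vxy vz : ℝ) {dx dy dz : ℝ} (h : |dz| ≤ t * √(dx ^ 2 + dy ^ 2)) :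
    heur t vxy vz dx dy dz = √(dx ^ 2 + dy ^ 2 + dz ^ 2) := by
  rw [heur, min_eq_left h, sub_self, max_self, zero_div, zero_mul, add_zero, sq_abs]

theorem heur_of_lt_abs {t vxy : ℝ} (ht : 0 < t) (hvxy : 0 < vxy) {dx dy dz : ℝ}
    (h : t * √(dx ^ 2 + dy ^ 2) < |dz|) :
    heur t vxy (t * vxy) dx dy dz = √(1 + t ^ 2) * |dz| / t := by
  set ρ := √(dx ^ 2 + dy ^ 2) with hρ
  have hρ2 : dx ^ 2 + dy ^ 2 = ρ ^ 2 := (sq_sqrt (by positivity)).symm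
  rw [heur, ← hρ, min_eq_right h.le, max_eq_right (by linarith), hρ2,
    sqrt_sq_add_mul_sq (sqrt_nonneg _), sqrt_sq_add_mul_sq hvxy.le]
  field_simp
  ring

theorem sqrt_lt_heur_of_lt_abs {t vxy : ℝ} (ht : 0 < t) (hvxy : 0 < vxy) {dx dy dz : ℝ}
    (h : t * √(dx ^ 2 + dy ^ 2) < |dz|) :
    √(dx ^ 2 + dy ^ 2 + dz ^ 2) < heur t vxy (t * vxy) dx dy dz := by
  have hρ : dx ^ 2 + dy ^ 2 = √(dx ^ 2 + dy ^ 2) ^ 2 := (sq_sqrt (by positivity)).symm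
  rw [heur_of_lt_abs ht hvxy h, hρ, ← sq_abs dz]
  exact sqrt_add_sq_lt_of_mul_lt ht (sqrt_nonneg _) h

theorem stmt_3 (φ t vxy vz : ℝ) (hφ0 : 0 < φ) (hφ1 : φ ≤ Real.pi / 2)
    (ht : t = Real.tan (φ / 2)) (hvxy : 0 < vxy) (hvz : vz = t * vxy)
    (dx dy dz : ℝ) :
    heur t vxy vz dx dy dz ≥ Real.sqrt (dx ^ 2 + dy ^ 2 + dz ^ 2) ∧
    (heur t vxy vz dx dy dz = Real.sqrt (dx ^ 2 + dy ^ 2 + dz ^ 2) ↔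
      |dz| ≤ t * Real.sqrt (dx ^ 2 + dy ^ 2)) := by
  have ht0 : 0 < t := ht ▸ tan_half_pos hφ0 (by linarith [pi_pos])
  subst hvz
  by_cases hc : |dz| ≤ t * √(dx ^ 2 + dy ^ 2)
  · have heq := heur_of_abs_le t vxy (t * vxy) hc
    exact ⟨heq.ge, iff_of_true heq hc⟩
  · have hlt := sqrt_lt_heur_of_lt_abs ht0 hvxy (not_le.mp hc)
    exact ⟨hlt.le, iff_of_false hlt.ne' hc⟩
end

section
/- Let φ ∈ (0, π/2], t = tan(φ/2), v_xy > 0 and v_z = t·v_xy. For every d ∈ ℝ³ and every slope-constrained polygonal path p_0 = 0, p_1, …, p_n = d from the origin to d, the total Euclidean length satisfies Σ_{i=1}^n ‖p_i − p_{i−1}‖ ≥ h(d). Hence h is an admissible heuristic (it never overestimates the shortest slope-constrained path length) for A* search on any graph whose edges are straight segments satisfying the slope constraint. -/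
lemma abs_mk (a b : ℝ) : ‖(⟨a, b⟩ : ℂ)‖ = Real.sqrt (a ^ 2 + b ^ 2) := by
  rw [Complex.norm_def, Complex.normSq_mk]; ring_nf

lemma mink (n : ℕ) (f g : ℕ → ℝ) :
    Real.sqrt ((∑ i ∈ Finset.range n, f i) ^ 2 + (∑ i ∈ Finset.range n, g i) ^ 2)
      ≤ ∑ i ∈ Finset.range n, Real.sqrt (f i ^ 2 + g i ^ 2) := by
  have h := norm_sum_le (Finset.range n) (fun i => (⟨f i, g i⟩ : ℂ))
  have hs : (∑ i ∈ Finset.range n, (⟨f i, g i⟩ : ℂ)) =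
      ⟨∑ i ∈ Finset.range n, f i, ∑ i ∈ Finset.range n, g i⟩ := by
    apply Complex.ext <;> simp [Complex.re_sum, Complex.im_sum]
  simpa [abs_mk, hs] using h

/-- Euclidean length of the segment from `p` to `q` in `ℝ³`. -/
noncomputable def segLen (p q : ℝ × ℝ × ℝ) : ℝ :=
  Real.sqrt ((q.1 - p.1) ^ 2 + (q.2.1 - p.2.1) ^ 2 + (q.2.2 - p.2.2) ^ 2)

/-- Length of the planar (x,y) projection of the segment from `p` to `q`. -/
noncomputable def horLen (p q : ℝ × ℝ × ℝ) : ℝ :=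
  Real.sqrt ((q.1 - p.1) ^ 2 + (q.2.1 - p.2.1) ^ 2)

/-- A polygonal path `p 0, …, p n` is slope-constrained with parameter `t` if every
segment satisfies `|Δz| ≤ t·‖Δxy‖`. -/
def SlopeConstrained (t : ℝ) (n : ℕ) (p : ℕ → ℝ × ℝ × ℝ) : Prop :=
  ∀ i < n, |(p (i + 1)).2.2 - (p i).2.2| ≤ t * horLen (p i) (p (i + 1))

theorem stmt_6 (φ t vxy vz : ℝ) (hφ0 : 0 < φ) (hφ1 : φ ≤ Real.pi / 2)
    (ht : t = Real.tan (φ / 2)) (hvxy : 0 < vxy) (hvz : vz = t * vxy)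
    (dx dy dz : ℝ) (n : ℕ) (p : ℕ → ℝ × ℝ × ℝ)
    (h0 : p 0 = (0, 0, 0)) (hn : p n = (dx, dy, dz))
    (hslope : SlopeConstrained t n p) :
    ∑ i ∈ Finset.range n, segLen (p i) (p (i + 1)) ≥ heur t vxy vz dx dy dz := by
  have ht0 : 0 < t := by
    rw [ht]
    apply Real.tan_pos_of_pos_of_lt_pi_div_two (by linarith)
    have hπ : 0 < Real.pi := Real.pi_pos
    linarith
  set ρ : ℝ := Real.sqrt (dx ^ 2 + dy ^ 2) with hρ
  have hρ0 : 0 ≤ ρ := Real.sqrt_nonneg _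
  have hρ2 : ρ ^ 2 = dx ^ 2 + dy ^ 2 := Real.sq_sqrt (by positivity)
  -- segment data
  set f : ℕ → ℝ := fun i => horLen (p i) (p (i + 1)) with hf
  set g : ℕ → ℝ := fun i => (p (i + 1)).2.2 - (p i).2.2 with hg
  have hf0 : ∀ i, 0 ≤ f i := fun i => Real.sqrt_nonneg _
  have hseg : ∀ i, segLen (p i) (p (i + 1)) = Real.sqrt (f i ^ 2 + g i ^ 2) := by
    intro i
    have : f i ^ 2 = ((p (i+1)).1 - (p i).1) ^ 2 + ((p (i+1)).2.1 - (p i).2.1) ^ 2 :=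
      Real.sq_sqrt (by positivity)
    rw [segLen, this]
  set R : ℝ := ∑ i ∈ Finset.range n, f i with hR
  have hgsum : ∑ i ∈ Finset.range n, g i = dz := by
    rw [hg]
    rw [Finset.sum_range_sub (fun i => (p i).2.2)]
    rw [h0, hn]
    simp
  -- total length lower bound
  have hL : Real.sqrt (R ^ 2 + dz ^ 2) ≤ ∑ i ∈ Finset.range n, segLen (p i) (p (i + 1)) := by
    have := mink n f g
    rw [hgsum] at this
    calc Real.sqrt (R ^ 2 + dz ^ 2) ≤ ∑ i ∈ Finset.range n, Real.sqrt (f i ^ 2 + g i ^ 2) := this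
    _ = _ := by simp [hseg]
  -- R ≥ ρ
  have hRρ : ρ ≤ R := by
    have h1 := mink n (fun i => (p (i+1)).1 - (p i).1) (fun i => (p (i+1)).2.1 - (p i).2.1)
    have hx : ∑ i ∈ Finset.range n, ((p (i+1)).1 - (p i).1) = dx := by
      rw [Finset.sum_range_sub (fun i => (p i).1), h0, hn]; simp
    have hy : ∑ i ∈ Finset.range n, ((p (i+1)).2.1 - (p i).2.1) = dy := by
      rw [Finset.sum_range_sub (fun i => (p i).2.1), h0, hn]; simp
    rw [hx, hy] at h1
    calc ρ ≤ ∑ i ∈ Finset.range n, Real.sqrt (((p (i+1)).1 - (p i).1) ^ 2 + ((p (i+1)).2.1 - (p i).2.1) ^ 2) := h1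
    _ = R := by rfl
  have hR0 : 0 ≤ R := le_trans hρ0 hRρ
  -- t R ≥ |dz|
  have htR : |dz| ≤ t * R := by
    calc |dz| = |∑ i ∈ Finset.range n, g i| := by rw [hgsum]
    _ ≤ ∑ i ∈ Finset.range n, |g i| := Finset.abs_sum_le_sum_abs _ _
    _ ≤ ∑ i ∈ Finset.range n, t * f i := by
        apply Finset.sum_le_sum
        intro i hi
        exact hslope i (Finset.mem_range.mp hi)
    _ = t * R := by rw [Finset.mul_sum]
  rcases le_or_gt |dz| (t * ρ) with hc | hc
  · -- case 1
    have hmin : min |dz| (t * ρ) = |dz| := min_eq_left hc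
    have hheur : heur t vxy vz dx dy dz = Real.sqrt (dx ^ 2 + dy ^ 2 + dz ^ 2) := by
      rw [heur, ← hρ, hmin]
      simp [sq_abs]
    rw [hheur]
    refine le_trans ?_ hL
    apply Real.sqrt_le_sqrt
    have : dx ^ 2 + dy ^ 2 ≤ R ^ 2 := by
      rw [← hρ2]; exact pow_le_pow_left₀ hρ0 hRρ 2
    linarith
  · -- case 2
    have hmin : min |dz| (t * ρ) = t * ρ := min_eq_right hc.le
    have hs1 : Real.sqrt (1 + t ^ 2) ≥ 0 := Real.sqrt_nonneg _
    have hheur : heur t vxy vz dx dy dz = Real.sqrt (1 + t ^ 2) * |dz| / t := by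
      rw [heur, ← hρ, hmin]
      have e1 : dx ^ 2 + dy ^ 2 + (t * ρ) ^ 2 = ρ ^ 2 * (1 + t ^ 2) := by rw [← hρ2]; ring
      have e2 : vxy ^ 2 + vz ^ 2 = vxy ^ 2 * (1 + t ^ 2) := by rw [hvz]; ring
      rw [e1, e2, Real.sqrt_mul (by positivity), Real.sqrt_mul (by positivity),
        Real.sqrt_sq hρ0, Real.sqrt_sq hvxy.le]
      have hmax : max 0 (|dz| - t * ρ) = |dz| - t * ρ := max_eq_right (by linarith)
      rw [hmax, hvz]
      field_simp
      ring
    rw [hheur]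
    refine le_trans ?_ hL
    have hRdz : |dz| / t ≤ R := by
      rw [div_le_iff₀ ht0]; linarith [htR]
    have key : Real.sqrt (1 + t ^ 2) * |dz| / t = Real.sqrt ((|dz| / t) ^ 2 + dz ^ 2) := by
      rw [show (|dz| / t) ^ 2 + dz ^ 2 = (|dz| / t) ^ 2 * (1 + t ^ 2) by
        field_simp; rw [sq_abs]; ring]
      rw [Real.sqrt_mul (by positivity), Real.sqrt_sq (by positivity)]
      ring
    rw [key]
    apply Real.sqrt_le_sqrt
    have : (|dz| / t) ^ 2 ≤ R ^ 2 := pow_le_pow_left₀ (by positivity) hRdz 2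
    linarith
end

section
/- Let φ ∈ (0, π/2], t = tan(φ/2), v_xy > 0 and v_z = t·v_xy. Let s_1, …, s_n ∈ ℝ³ be a finite sequence of grid steps, each of the form s_i = (a_i·v_xy, b_i·v_xy, c_i·v_z) with (a_i, b_i, c_i) ∈ {−1, 0, 1}³, (a_i, b_i, c_i) ≠ (0, 0, 0), and (a_i, b_i) ≠ (0, 0) whenever c_i ≠ 0 (i.e., the two purely vertical edges are removed from the Moore neighborhood). If Σ_{i=1}^n s_i = d, then Σ_{i=1}^n ‖s_i‖ ≥ h(d). That is, h is an admissible heuristic for shortest-path search in the visibility-constrained anisotropic grid graph. -/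
/-- Euclidean norm of a vector in `ℝ³` given by its three components. -/
noncomputable def vecLen (x y z : ℝ) : ℝ := Real.sqrt (x ^ 2 + y ^ 2 + z ^ 2)

lemma vecLen_triangle (n : ℕ) (x y z : Fin n → ℝ) :
    vecLen (∑ i, x i) (∑ i, y i) (∑ i, z i) ≤ ∑ i, vecLen (x i) (y i) (z i) := by
  classical
  let f : Fin n → EuclideanSpace ℝ (Fin 3) := fun i => WithLp.toLp 2 ![x i, y i, z i]
  have hnorm : ∀ i, ‖f i‖ = vecLen (x i) (y i) (z i) := by
    intro i
    rw [EuclideanSpace.norm_eq]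
    simp [vecLen, Fin.sum_univ_three, f, sq_abs]
  have hsumnorm : ‖∑ i, f i‖ = vecLen (∑ i, x i) (∑ i, y i) (∑ i, z i) := by
    have h0 : (∑ i, f i) 0 = ∑ i, x i := by
      rw [show ((∑ i, f i) 0) = ∑ i, f i 0 from by rw [WithLp.ofLp_sum, Finset.sum_apply]]
      simp [f]
    have h1 : (∑ i, f i) 1 = ∑ i, y i := by
      rw [show ((∑ i, f i) 1) = ∑ i, f i 1 from by rw [WithLp.ofLp_sum, Finset.sum_apply]]
      simp [f]
    have h2 : (∑ i, f i) 2 = ∑ i, z i := by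
      rw [show ((∑ i, f i) 2) = ∑ i, f i 2 from by rw [WithLp.ofLp_sum, Finset.sum_apply]]
      simp [f]
    rw [EuclideanSpace.norm_eq, Fin.sum_univ_three, h0, h1, h2]
    simp [vecLen, sq_abs]
  calc vecLen (∑ i, x i) (∑ i, y i) (∑ i, z i) = ‖∑ i, f i‖ := hsumnorm.symm
    _ ≤ ∑ i, ‖f i‖ := norm_sum_le _ _
    _ = ∑ i, vecLen (x i) (y i) (z i) := by simp [hnorm]

theorem stmt_7 (φ t vxy vz : ℝ) (hφ0 : 0 < φ) (hφ1 : φ ≤ Real.pi / 2)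
    (ht : t = Real.tan (φ / 2)) (hvxy : 0 < vxy) (hvz : vz = t * vxy)
    (dx dy dz : ℝ) (n : ℕ) (a b c : Fin n → ℤ)
    (ha : ∀ i, a i ∈ ({-1, 0, 1} : Set ℤ))
    (hb : ∀ i, b i ∈ ({-1, 0, 1} : Set ℤ))
    (hc : ∀ i, c i ∈ ({-1, 0, 1} : Set ℤ))
    (hne : ∀ i, ¬(a i = 0 ∧ b i = 0 ∧ c i = 0))
    (hvert : ∀ i, c i ≠ 0 → ¬(a i = 0 ∧ b i = 0))
    (hsumx : ∑ i, (a i : ℝ) * vxy = dx)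
    (hsumy : ∑ i, (b i : ℝ) * vxy = dy)
    (hsumz : ∑ i, (c i : ℝ) * vz = dz) :
    ∑ i, vecLen ((a i : ℝ) * vxy) ((b i : ℝ) * vxy) ((c i : ℝ) * vz) ≥
      heur t vxy vz dx dy dz := by
  have ht0 : 0 < t := by
    rw [ht]
    apply Real.tan_pos_of_pos_of_lt_pi_div_two
    · linarith
    · linarith [Real.pi_pos]
  have hvz0 : 0 < vz := by rw [hvz]; exact mul_pos ht0 hvxy
  set ρ := Real.sqrt (dx ^ 2 + dy ^ 2) with hρ
  have hρ0 : 0 ≤ ρ := Real.sqrt_nonneg _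
  have hρ2 : ρ ^ 2 = dx ^ 2 + dy ^ 2 := Real.sq_sqrt (by positivity)
  set L := Real.sqrt (vxy ^ 2 + vz ^ 2) with hL
  have hL0 : 0 ≤ L := Real.sqrt_nonneg _
  -- triangle inequality bound
  have hA : vecLen dx dy dz ≤
      ∑ i, vecLen ((a i : ℝ) * vxy) ((b i : ℝ) * vxy) ((c i : ℝ) * vz) := by
    rw [← hsumx, ← hsumy, ← hsumz]
    exact vecLen_triangle n _ _ _
  -- vertical-count bound
  have key : ∀ i, |(c i : ℝ)| * L ≤
      vecLen ((a i : ℝ) * vxy) ((b i : ℝ) * vxy) ((c i : ℝ) * vz) := by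
    intro i
    rcases (show c i = -1 ∨ c i = 0 ∨ c i = 1 by simpa using hc i) with h | h | h
    case inr.inl =>
      simp [h, vecLen, Real.sqrt_nonneg]
    all_goals {
      have hcne : c i ≠ 0 := by rw [h]; decide
      have hab := hvert i hcne
      have hab1 : (1 : ℝ) ≤ (a i : ℝ) ^ 2 + (b i : ℝ) ^ 2 := by
        rcases (show a i = -1 ∨ a i = 0 ∨ a i = 1 by simpa using ha i) with h' | h' | h' <;>
        rcases (show b i = -1 ∨ b i = 0 ∨ b i = 1 by simpa using hb i) with h'' | h'' | h'' <;>
          simp [h', h''] at hab ⊢ <;> norm_num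
      have habs : |(c i : ℝ)| = 1 := by rw [h]; norm_num
      rw [habs, one_mul, hL, vecLen]
      apply Real.sqrt_le_sqrt
      have hc2 : ((c i : ℝ) * vz) ^ 2 = vz ^ 2 := by rw [h]; push_cast; ring
      nlinarith [sq_nonneg vxy]
    }
  have hB : |dz| / vz * L ≤
      ∑ i, vecLen ((a i : ℝ) * vxy) ((b i : ℝ) * vxy) ((c i : ℝ) * vz) := by
    have h1 : |dz| ≤ (∑ i, |(c i : ℝ)|) * vz := by
      have : dz = (∑ i, (c i : ℝ)) * vz := by rw [← hsumz, Finset.sum_mul]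
      rw [this, abs_mul, abs_of_pos hvz0]
      exact mul_le_mul_of_nonneg_right (Finset.abs_sum_le_sum_abs _ _) hvz0.le
    calc |dz| / vz * L ≤ (∑ i, |(c i : ℝ)|) * L := by
          apply mul_le_mul_of_nonneg_right _ hL0
          rw [div_le_iff₀ hvz0]
          exact h1
      _ = ∑ i, |(c i : ℝ)| * L := by rw [Finset.sum_mul]
      _ ≤ _ := Finset.sum_le_sum fun i _ => key i
  rw [ge_iff_le, heur]
  rcases le_or_gt |dz| (t * ρ) with hcase | hcase
  · rw [min_eq_left hcase]
    have : max (0:ℝ) (|dz| - |dz|) = 0 := by simp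
    rw [this, zero_div, zero_mul, add_zero, sq_abs]
    exact hA
  · rw [min_eq_right hcase.le]
    have hsq1 : Real.sqrt (dx ^ 2 + dy ^ 2 + (t * ρ) ^ 2) = Real.sqrt (1 + t ^ 2) * ρ := by
      rw [show dx ^ 2 + dy ^ 2 + (t * ρ) ^ 2 = (1 + t ^ 2) * ρ ^ 2 by rw [← hρ2]; ring,
        Real.sqrt_mul (by positivity), Real.sqrt_sq hρ0]
    have hsq2 : L = Real.sqrt (1 + t ^ 2) * vxy := by
      rw [hL, show vxy ^ 2 + vz ^ 2 = (1 + t ^ 2) * vxy ^ 2 by rw [hvz]; ring,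
        Real.sqrt_mul (by positivity), Real.sqrt_sq hvxy.le]
    have hmax : max (0:ℝ) (|dz| - t * ρ) = |dz| - t * ρ := by
      rw [max_eq_right]; linarith
    rw [hsq1, ← hL, hmax]
    have heq : Real.sqrt (1 + t ^ 2) * ρ + (|dz| - t * ρ) / vz * L = |dz| / vz * L := by
      rw [hsq2, hvz]
      field_simp
      ring
    rw [heq]
    exact hB
end

section
/- Let φ ∈ (0, π/2], t = tan(φ/2), v_xy > 0 and v_z = t·v_xy. For every d ∈ ℝ³ there exists a slope-constrained polygonal path p_0 = 0, p_1, …, p_n = d from the origin to d whose total Euclidean length equals exactly h(d). -/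
set_option maxHeartbeats 1000000 in
theorem stmt_9 (φ t vxy vz : ℝ) (hφ0 : 0 < φ) (hφ1 : φ ≤ Real.pi / 2)
    (ht : t = Real.tan (φ / 2)) (hvxy : 0 < vxy) (hvz : vz = t * vxy)
    (dx dy dz : ℝ) :
    ∃ (n : ℕ) (p : ℕ → ℝ × ℝ × ℝ),
      p 0 = (0, 0, 0) ∧ p n = (dx, dy, dz) ∧ SlopeConstrained t n p ∧
      ∑ i ∈ Finset.range n, segLen (p i) (p (i + 1)) = heur t vxy vz dx dy dz := by
  have ht2 : 0 < t := by
    rw [ht]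
    apply Real.tan_pos_of_pos_of_lt_pi_div_two
    · linarith
    · nlinarith [Real.pi_pos]
  set ρ := Real.sqrt (dx ^ 2 + dy ^ 2) with hρdef
  have hρ0 : 0 ≤ ρ := Real.sqrt_nonneg _
  have hρsq : ρ ^ 2 = dx ^ 2 + dy ^ 2 := Real.sq_sqrt (by positivity)
  by_cases hle : |dz| ≤ t * ρ
  · -- single straight segment
    refine ⟨1, fun i => match i with | 0 => (0, 0, 0) | _ => (dx, dy, dz),
      rfl, rfl, ?_, ?_⟩
    · intro i hi
      interval_cases i
      show |dz - 0| ≤ t * horLen (0, 0, 0) (dx, dy, dz)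
      simpa [horLen, hρdef] using hle
    · rw [Finset.sum_range_one]
      show segLen (0, 0, 0) (dx, dy, dz) = _
      simp only [heur, segLen, ← hρdef, min_eq_left hle]
      rw [show |dz| - |dz| = 0 by ring, max_self, zero_div, zero_mul, add_zero, sq_abs]
      norm_num
  · push_neg at hle
    obtain ⟨e1, e2, he, hdx, hdy⟩ :
        ∃ e1 e2 : ℝ, e1 ^ 2 + e2 ^ 2 = 1 ∧ dx = ρ * e1 ∧ dy = ρ * e2 := by
      by_cases h : ρ = 0
      · have hx : dx = 0 ∧ dy = 0 := by
          constructor <;> nlinarith [sq_nonneg dx, sq_nonneg dy]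
        exact ⟨1, 0, by norm_num, by simp [h, hx.1], by simp [h, hx.2]⟩
      · refine ⟨dx / ρ, dy / ρ, ?_, by field_simp, by field_simp⟩
        field_simp
        linarith [hρsq]
    obtain ⟨s, hs, hsz⟩ : ∃ s : ℝ, s ^ 2 = 1 ∧ s * |dz| = dz := by
      rcases le_or_gt 0 dz with h | h
      · exact ⟨1, by norm_num, by rw [abs_of_nonneg h]; ring⟩
      · exact ⟨-1, by norm_num, by rw [abs_of_neg h]; ring⟩
    have habs_s : |s| = 1 := by
      rcases abs_cases s with ⟨h1, _⟩ | ⟨h1, _⟩ <;> nlinarith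
    set r := |dz| - t * ρ with hrdef
    have hr : 0 < r := by simp only [hrdef]; linarith
    set L2 := r / (2 * t) with hL2def
    have hL2 : 0 < L2 := by positivity
    have htL2 : t * L2 = r / 2 := by rw [hL2def]; field_simp
    set L1 := ρ + L2 with hL1def
    have hL1 : 0 < L1 := by positivity
    have hdz : dz = s * (t * ρ + r) := by rw [← hsz, hrdef]; ring
    have hz2 : dz - s * t * L1 = s * (t * L2) := by
      rw [hdz, hL1def]; linear_combination (-2 * s) * htL2
    refine ⟨2, fun i => match i with
      | 0 => (0, 0, 0)
      | 1 => (L1 * e1, L1 * e2, s * t * L1)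
      | _ => (dx, dy, dz), rfl, rfl, ?_, ?_⟩
    · intro i hi
      interval_cases i
      · show |s * t * L1 - 0| ≤ t * horLen (0, 0, 0) (L1 * e1, L1 * e2, s * t * L1)
        have h1 : horLen (0, 0, 0) (L1 * e1, L1 * e2, s * t * L1) = L1 := by
          simp only [horLen]
          rw [show (L1 * e1 - 0) ^ 2 + (L1 * e2 - 0) ^ 2 = L1 ^ 2 by nlinarith]
          exact Real.sqrt_sq hL1.le
        have h2 : |s * t * L1 - 0| = t * L1 := by
          rw [sub_zero, abs_mul, abs_mul, habs_s, abs_of_pos ht2, abs_of_pos hL1]; ring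
        rw [h1, h2]
      · show |dz - s * t * L1| ≤
          t * horLen (L1 * e1, L1 * e2, s * t * L1) (dx, dy, dz)
        have h1 : horLen (L1 * e1, L1 * e2, s * t * L1) (dx, dy, dz) = L2 := by
          simp only [horLen]
          rw [show (dx - L1 * e1) ^ 2 + (dy - L1 * e2) ^ 2 = L2 ^ 2 by
            rw [hdx, hL1def, hdy]; nlinarith]
          exact Real.sqrt_sq hL2.le
        rw [h1, hz2, abs_mul, habs_s, one_mul,
          abs_of_pos (by positivity : (0:ℝ) < t * L2)]
    · rw [Finset.sum_range_succ, Finset.sum_range_one]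
      show segLen (0, 0, 0) (L1 * e1, L1 * e2, s * t * L1) +
        segLen (L1 * e1, L1 * e2, s * t * L1) (dx, dy, dz) = _
      have hseg1 : segLen (0, 0, 0) (L1 * e1, L1 * e2, s * t * L1)
          = L1 * Real.sqrt (1 + t ^ 2) := by
        simp only [segLen]
        rw [show (L1 * e1 - 0) ^ 2 + (L1 * e2 - 0) ^ 2 + (s * t * L1 - 0) ^ 2
            = L1 ^ 2 * (1 + t ^ 2) by nlinarith]
        rw [Real.sqrt_mul (sq_nonneg _), Real.sqrt_sq hL1.le]
      have hseg2 : segLen (L1 * e1, L1 * e2, s * t * L1) (dx, dy, dz)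
          = L2 * Real.sqrt (1 + t ^ 2) := by
        simp only [segLen]
        rw [show (dx - L1 * e1) ^ 2 + (dy - L1 * e2) ^ 2 + (dz - s * t * L1) ^ 2
            = L2 ^ 2 * (1 + t ^ 2) by rw [hz2, hdx, hdy, hL1def]; nlinarith]
        rw [Real.sqrt_mul (sq_nonneg _), Real.sqrt_sq hL2.le]
      rw [hseg1, hseg2]
      simp only [heur, ← hρdef]
      rw [min_eq_right hle.le, max_eq_right (by linarith : (0:ℝ) ≤ |dz| - t * ρ)]
      have hfirst : Real.sqrt (dx ^ 2 + dy ^ 2 + (t * ρ) ^ 2)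
          = ρ * Real.sqrt (1 + t ^ 2) := by
        rw [show dx ^ 2 + dy ^ 2 + (t * ρ) ^ 2 = ρ ^ 2 * (1 + t ^ 2) by nlinarith]
        rw [Real.sqrt_mul (sq_nonneg _), Real.sqrt_sq hρ0]
      have hsecond : Real.sqrt (vxy ^ 2 + vz ^ 2) = vxy * Real.sqrt (1 + t ^ 2) := by
        rw [show vxy ^ 2 + vz ^ 2 = vxy ^ 2 * (1 + t ^ 2) by rw [hvz]; ring]
        rw [Real.sqrt_mul (sq_nonneg _), Real.sqrt_sq hvxy.le]
      rw [hfirst, hsecond, hvz, ← hrdef, hL1def, hL2def]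
      field_simp
      ring
end

section
/- Let φ ∈ (0, π/2], t = tan(φ/2), v_xy > 0 and v_z = t·v_xy. For every d ∈ ℝ³, h(d) equals the infimum of the Euclidean lengths of all slope-constrained polygonal paths from the origin to d, and this infimum is attained. In other words, h is exactly the shortest-path distance under the visibility (slope) constraint. -/
namespace Stmt10Aux

lemma sqrt_ratio (t z : ℝ) (ht : 0 < t) :
    |z| * Real.sqrt (1 + t ^ 2) / t = Real.sqrt (z ^ 2 / t ^ 2 + z ^ 2) := by
  have hS : Real.sqrt (1 + t ^ 2) ^ 2 = 1 + t ^ 2 :=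
    Real.sq_sqrt (by positivity)
  rw [show z ^ 2 / t ^ 2 + z ^ 2 = (|z| * Real.sqrt (1 + t ^ 2) / t) ^ 2 by
    field_simp
    nlinarith [sq_abs z]]
  rw [Real.sqrt_sq (by positivity)]

/-- In the regime `|dz| ≤ t·ρ`, the heuristic is the Euclidean norm. -/
lemma heurA (t vxy vz dx dy dz : ℝ)
    (hc : |dz| ≤ t * Real.sqrt (dx ^ 2 + dy ^ 2)) :
    heur t vxy vz dx dy dz = Real.sqrt (dx ^ 2 + dy ^ 2 + dz ^ 2) := by
  unfold heur
  rw [min_eq_left hc, sq_abs]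
  simp

/-- In the regime `t·ρ ≤ |dz|`, the heuristic is `|dz|·√(1+t²)/t`. -/
lemma heurB (t vxy vz dx dy dz : ℝ) (ht : 0 < t) (hvxy : 0 < vxy)
    (hvz : vz = t * vxy)
    (hc : t * Real.sqrt (dx ^ 2 + dy ^ 2) ≤ |dz|) :
    heur t vxy vz dx dy dz = |dz| * Real.sqrt (1 + t ^ 2) / t := by
  have hS : Real.sqrt (1 + t ^ 2) ^ 2 = 1 + t ^ 2 := Real.sq_sqrt (by positivity)
  have hρ0 : 0 ≤ Real.sqrt (dx ^ 2 + dy ^ 2) := Real.sqrt_nonneg _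
  have hρsq : Real.sqrt (dx ^ 2 + dy ^ 2) ^ 2 = dx ^ 2 + dy ^ 2 :=
    Real.sq_sqrt (by positivity)
  set ρ := Real.sqrt (dx ^ 2 + dy ^ 2) with hρ
  unfold heur
  rw [← hρ, min_eq_right hc]
  have h1 : Real.sqrt (dx ^ 2 + dy ^ 2 + (t * ρ) ^ 2) = ρ * Real.sqrt (1 + t ^ 2) := by
    rw [show dx ^ 2 + dy ^ 2 + (t * ρ) ^ 2 = (ρ * Real.sqrt (1 + t ^ 2)) ^ 2 by
      nlinarith]
    exact Real.sqrt_sq (by positivity)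
  have h2 : Real.sqrt (vxy ^ 2 + vz ^ 2) = vxy * Real.sqrt (1 + t ^ 2) := by
    rw [hvz, show vxy ^ 2 + (t * vxy) ^ 2 = (vxy * Real.sqrt (1 + t ^ 2)) ^ 2 by
      nlinarith]
    exact Real.sqrt_sq (by positivity)
  have h3 : max 0 (|dz| - t * ρ) = |dz| - t * ρ := max_eq_right (by linarith)
  rw [h1, h2, h3, hvz]
  field_simp
  ring

/-- Key facts about a maximal-slope segment: from `a`, move by `β` horizontally in
unit direction `(ux,uy)` and by `s·t·β` vertically (with `s = ±1`). -/
lemma maxslope_facts (t ux uy s β : ℝ) (ht : 0 < t) (hu : ux ^ 2 + uy ^ 2 = 1)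
    (hs2 : s ^ 2 = 1) (hβ : 0 ≤ β) (a : ℝ × ℝ × ℝ) :
    horLen a (a.1 + β * ux, a.2.1 + β * uy, a.2.2 + s * (t * β)) = β ∧
    |(a.1 + β * ux, a.2.1 + β * uy, a.2.2 + s * (t * β)).2.2 - a.2.2| = t * β ∧
    segLen a (a.1 + β * ux, a.2.1 + β * uy, a.2.2 + s * (t * β)) =
      β * Real.sqrt (1 + t ^ 2) := by
  have hS : Real.sqrt (1 + t ^ 2) ^ 2 = 1 + t ^ 2 := Real.sq_sqrt (by positivity)
  have habs_s : |s| = 1 := by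
    have h1 := sq_abs s
    nlinarith [abs_nonneg s]
  refine ⟨?_, ?_, ?_⟩
  · unfold horLen
    simp only
    rw [show (a.1 + β * ux - a.1) ^ 2 + (a.2.1 + β * uy - a.2.1) ^ 2 = β ^ 2 by
      nlinarith]
    exact Real.sqrt_sq hβ
  · simp only
    rw [show a.2.2 + s * (t * β) - a.2.2 = s * (t * β) by ring,
      abs_mul, habs_s, one_mul, abs_of_nonneg (by positivity)]
  · unfold segLen
    simp only
    rw [show (a.1 + β * ux - a.1) ^ 2 + (a.2.1 + β * uy - a.2.1) ^ 2 +
        (a.2.2 + s * (t * β) - a.2.2) ^ 2 = (β * Real.sqrt (1 + t ^ 2)) ^ 2 by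
      linear_combination β ^ 2 * hu + t ^ 2 * β ^ 2 * hs2 - β ^ 2 * hS]
    exact Real.sqrt_sq (by positivity)

/-- Per-segment lower bound coming from the slope constraint. -/
lemma seg_lower (t : ℝ) (ht : 0 < t) (p q : ℝ × ℝ × ℝ)
    (hcon : |q.2.2 - p.2.2| ≤ t * horLen p q) :
    |q.2.2 - p.2.2| * Real.sqrt (1 + t ^ 2) / t ≤ segLen p q := by
  set Δz := q.2.2 - p.2.2
  have hhor : horLen p q ^ 2 = (q.1 - p.1) ^ 2 + (q.2.1 - p.2.1) ^ 2 :=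
    Real.sq_sqrt (by positivity)
  have hhor0 : 0 ≤ horLen p q := Real.sqrt_nonneg _
  rw [sqrt_ratio t Δz ht]
  unfold segLen
  apply Real.sqrt_le_sqrt
  have h1 : Δz ^ 2 ≤ t ^ 2 * ((q.1 - p.1) ^ 2 + (q.2.1 - p.2.1) ^ 2) := by
    nlinarith [abs_nonneg Δz, sq_abs Δz]
  have h2 : Δz ^ 2 / t ^ 2 ≤ (q.1 - p.1) ^ 2 + (q.2.1 - p.2.1) ^ 2 := by
    rw [div_le_iff₀ (by positivity)]
    nlinarith
  linarith

/-- Embedding of `ℝ × ℝ × ℝ` into `EuclideanSpace ℝ (Fin 3)`. -/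
noncomputable def emb (p : ℝ × ℝ × ℝ) : EuclideanSpace ℝ (Fin 3) :=
  WithLp.toLp 2 ![p.1, p.2.1, p.2.2]

lemma segLen_eq_dist (a b : ℝ × ℝ × ℝ) : segLen a b = dist (emb a) (emb b) := by
  unfold segLen emb
  rw [EuclideanSpace.dist_eq, Fin.sum_univ_three]
  simp only [PiLp.toLp_apply, Matrix.cons_val_zero, Matrix.cons_val_one, Matrix.head_cons,
    Matrix.cons_val_two, Matrix.tail_cons, Real.dist_eq, sq_abs]
  congr 1
  ring

end Stmt10Aux

open Stmt10Aux in
set_option maxHeartbeats 1000000 in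
theorem stmt_10 (φ t vxy vz : ℝ) (hφ0 : 0 < φ) (hφ1 : φ ≤ Real.pi / 2)
    (ht : t = Real.tan (φ / 2)) (hvxy : 0 < vxy) (hvz : vz = t * vxy)
    (dx dy dz : ℝ) :
    IsLeast {L : ℝ | ∃ (n : ℕ) (p : ℕ → ℝ × ℝ × ℝ),
        p 0 = (0, 0, 0) ∧ p n = (dx, dy, dz) ∧ SlopeConstrained t n p ∧
        ∑ i ∈ Finset.range n, segLen (p i) (p (i + 1)) = L}
      (heur t vxy vz dx dy dz) ∧
    heur t vxy vz dx dy dz =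
      sInf {L : ℝ | ∃ (n : ℕ) (p : ℕ → ℝ × ℝ × ℝ),
        p 0 = (0, 0, 0) ∧ p n = (dx, dy, dz) ∧ SlopeConstrained t n p ∧
        ∑ i ∈ Finset.range n, segLen (p i) (p (i + 1)) = L} := by
  have ht0 : 0 < t := by
    rw [ht]
    apply Real.tan_pos_of_pos_of_lt_pi_div_two (by linarith)
    have hpi : 0 < Real.pi := Real.pi_pos
    linarith
  have hS : Real.sqrt (1 + t ^ 2) ^ 2 = 1 + t ^ 2 := Real.sq_sqrt (by positivity)
  have hS0 : 0 ≤ Real.sqrt (1 + t ^ 2) := Real.sqrt_nonneg _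
  have hρ0 : 0 ≤ Real.sqrt (dx ^ 2 + dy ^ 2) := Real.sqrt_nonneg _
  have hρsq : Real.sqrt (dx ^ 2 + dy ^ 2) ^ 2 = dx ^ 2 + dy ^ 2 :=
    Real.sq_sqrt (by positivity)
  set ρ := Real.sqrt (dx ^ 2 + dy ^ 2) with hρdef
  -- Membership: the heuristic value is attained by an explicit path.
  have hmem : heur t vxy vz dx dy dz ∈ {L : ℝ | ∃ (n : ℕ) (p : ℕ → ℝ × ℝ × ℝ),
      p 0 = (0, 0, 0) ∧ p n = (dx, dy, dz) ∧ SlopeConstrained t n p ∧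
      ∑ i ∈ Finset.range n, segLen (p i) (p (i + 1)) = L} := by
    rcases le_or_gt |dz| (t * ρ) with hc | hc
    · -- straight segment
      refine ⟨1, fun i => if i = 0 then (0, 0, 0) else (dx, dy, dz), by simp, by simp,
        ?_, ?_⟩
      · intro i hi
        interval_cases i
        simpa [horLen] using hc
      · rw [heurA t vxy vz dx dy dz hc]
        simp [segLen]
    · -- two maximal-slope segments
      have hdz0 : dz ≠ 0 := by
        intro h
        rw [h] at hc
        simp at hc
        nlinarith
      set s : ℝ := if 0 ≤ dz then 1 else -1 with hsdef
      have hs : s * |dz| = dz := by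
        rcases le_or_gt 0 dz with h | h
        · rw [hsdef, if_pos h, abs_of_nonneg h]; ring
        · rw [hsdef, if_neg (not_le.mpr h), abs_of_neg h]; ring
      have hs2 : s ^ 2 = 1 := by
        rw [hsdef]; split <;> norm_num
      set ux : ℝ := if ρ = 0 then 1 else dx / ρ with huxdef
      set uy : ℝ := if ρ = 0 then 0 else dy / ρ with huydef
      have hu : ux ^ 2 + uy ^ 2 = 1 := by
        by_cases h : ρ = 0
        · simp [huxdef, huydef, h]
        · rw [huxdef, huydef, if_neg h, if_neg h]
          have hne : ρ ^ 2 ≠ 0 := pow_ne_zero _ h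
          field_simp
          linarith [hρsq]
      have hux : ρ * ux = dx := by
        by_cases h : ρ = 0
        · have h0 : dx ^ 2 + dy ^ 2 = 0 := by rw [← hρsq, h]; ring
          have hdx : dx = 0 := by nlinarith
          simp [h, hdx]
        · rw [huxdef, if_neg h]; field_simp
      have huy : ρ * uy = dy := by
        by_cases h : ρ = 0
        · have h0 : dx ^ 2 + dy ^ 2 = 0 := by rw [← hρsq, h]; ring
          have hdy : dy = 0 := by nlinarith
          simp [h, hdy]
        · rw [huydef, if_neg h]; field_simp
      set α : ℝ := (ρ + |dz| / t) / 2 with hαdef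
      set β : ℝ := α - ρ with hβdef
      have hρdz : ρ ≤ |dz| / t := by
        rw [le_div_iff₀ ht0]
        nlinarith [hc.le]
      have hβ0 : 0 ≤ β := by rw [hβdef, hαdef]; linarith
      have hα0 : 0 ≤ α := by rw [hβdef] at hβ0; linarith
      have hsum : α + β = |dz| / t := by rw [hβdef, hαdef]; ring
      -- the midpoint
      set m : ℝ × ℝ × ℝ := (α * ux, α * uy, s * (t * α)) with hmdef
      -- facts about the two segments, via `maxslope_facts`
      have hseg1 := maxslope_facts t ux uy s α ht0 hu hs2 hα0 (0, 0, 0)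
      have hseg2 := maxslope_facts t (-ux) (-uy) s β ht0 (by linear_combination hu) hs2 hβ0 m
      have he1 : (((0:ℝ), (0:ℝ), (0:ℝ)).1 + α * ux,
          ((0:ℝ), (0:ℝ), (0:ℝ)).2.1 + α * uy,
          ((0:ℝ), (0:ℝ), (0:ℝ)).2.2 + s * (t * α)) = m := by
        rw [hmdef]; simp
      have hm1 : m.1 = α * ux := by rw [hmdef]
      have hm2 : m.2.1 = α * uy := by rw [hmdef]
      have hm3 : m.2.2 = s * (t * α) := by rw [hmdef]
      have ht' : t * (α + β) = |dz| := by
        rw [hsum]; field_simp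
      have he2 : (m.1 + β * (-ux), m.2.1 + β * (-uy), m.2.2 + s * (t * β)) =
          (dx, dy, dz) := by
        simp only [Prod.mk.injEq]
        refine ⟨?_, ?_, ?_⟩
        · rw [← hux]; linear_combination (-ux) * hβdef
        · rw [← huy]; linear_combination (-uy) * hβdef
        · rw [← hs]; linear_combination s * ht'
      rw [he1] at hseg1
      rw [he2] at hseg2
      obtain ⟨hh1, hz1, hl1⟩ := hseg1
      obtain ⟨hh2, hz2, hl2⟩ := hseg2
      refine ⟨2, fun i => if i = 0 then (0, 0, 0) else if i = 1 then m else (dx, dy, dz),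
        by simp, by simp, ?_, ?_⟩
      · intro i hi
        interval_cases i
        · show |m.2.2 - ((0, 0, 0) : ℝ × ℝ × ℝ).2.2| ≤
            t * horLen ((0, 0, 0) : ℝ × ℝ × ℝ) m
          rw [hz1, hh1]
        · show |((dx, dy, dz) : ℝ × ℝ × ℝ).2.2 - m.2.2| ≤
            t * horLen m ((dx, dy, dz) : ℝ × ℝ × ℝ)
          rw [hz2, hh2]
      · rw [Finset.sum_range_succ, Finset.sum_range_one]
        show segLen ((0, 0, 0) : ℝ × ℝ × ℝ) m +
            segLen m ((dx, dy, dz) : ℝ × ℝ × ℝ) = _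
        rw [hl1, hl2, heurB t vxy vz dx dy dz ht0 hvxy hvz hc.le]
        linear_combination Real.sqrt (1 + t ^ 2) * hsum
  -- Lower bound: every admissible path has length at least the heuristic.
  have hlb : ∀ L ∈ {L : ℝ | ∃ (n : ℕ) (p : ℕ → ℝ × ℝ × ℝ),
      p 0 = (0, 0, 0) ∧ p n = (dx, dy, dz) ∧ SlopeConstrained t n p ∧
      ∑ i ∈ Finset.range n, segLen (p i) (p (i + 1)) = L},
      heur t vxy vz dx dy dz ≤ L := by
    rintro L ⟨n, p, h0, hn, hsc, rfl⟩
    rcases le_or_gt |dz| (t * ρ) with hc | hc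
    · -- Euclidean lower bound
      rw [heurA t vxy vz dx dy dz hc]
      calc Real.sqrt (dx ^ 2 + dy ^ 2 + dz ^ 2) = segLen (p 0) (p n) := by
            rw [h0, hn]; unfold segLen; norm_num
        _ = dist (emb (p 0)) (emb (p n)) := segLen_eq_dist _ _
        _ ≤ ∑ i ∈ Finset.range n, dist (emb (p i)) (emb (p (i + 1))) :=
            dist_le_range_sum_dist (fun i => emb (p i)) n
        _ = ∑ i ∈ Finset.range n, segLen (p i) (p (i + 1)) := by
            refine Finset.sum_congr rfl fun i _ => ?_
            rw [segLen_eq_dist]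
    · -- slope lower bound
      rw [heurB t vxy vz dx dy dz ht0 hvxy hvz hc.le]
      have hz : |dz| ≤ ∑ i ∈ Finset.range n, |(p (i + 1)).2.2 - (p i).2.2| := by
        have htel : ∑ i ∈ Finset.range n, ((p (i + 1)).2.2 - (p i).2.2) =
            (p n).2.2 - (p 0).2.2 := Finset.sum_range_sub (fun i => (p i).2.2) n
        have : dz = ∑ i ∈ Finset.range n, ((p (i + 1)).2.2 - (p i).2.2) := by
          rw [htel, h0, hn]; norm_num
        rw [this]
        exact Finset.abs_sum_le_sum_abs _ _
      calc |dz| * Real.sqrt (1 + t ^ 2) / t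
          = |dz| * (Real.sqrt (1 + t ^ 2) / t) := by ring
        _ ≤ (∑ i ∈ Finset.range n, |(p (i + 1)).2.2 - (p i).2.2|) *
            (Real.sqrt (1 + t ^ 2) / t) := by
            apply mul_le_mul_of_nonneg_right hz (by positivity)
        _ = ∑ i ∈ Finset.range n,
            |(p (i + 1)).2.2 - (p i).2.2| * Real.sqrt (1 + t ^ 2) / t := by
            rw [Finset.sum_mul]
            refine Finset.sum_congr rfl fun i _ => by ring
        _ ≤ ∑ i ∈ Finset.range n, segLen (p i) (p (i + 1)) := by
            refine Finset.sum_le_sum fun i hi => ?_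
            exact seg_lower t ht0 (p i) (p (i + 1))
              (hsc i (Finset.mem_range.mp hi))
  have hleast : IsLeast {L : ℝ | ∃ (n : ℕ) (p : ℕ → ℝ × ℝ × ℝ),
      p 0 = (0, 0, 0) ∧ p n = (dx, dy, dz) ∧ SlopeConstrained t n p ∧
      ∑ i ∈ Finset.range n, segLen (p i) (p (i + 1)) = L}
      (heur t vxy vz dx dy dz) := ⟨hmem, hlb⟩
  exact ⟨hleast, hleast.csInf_eq.symm⟩
end

section
/- Let t > 0, ρ ≥ 0 and D ∈ ℝ. The function f : ℝ → ℝ defined by f(z) = √(ρ² + z²) + (D − z)·√(1 + t²)/t is strictly decreasing. Consequently, for d with |d_z| > t·ρ(d), splitting the altitude change as a straight ascent z followed by a maximal-slope detour for the remainder is optimized by taking z as large as the slope constraint allows, namely z = t·ρ(d); reducing the remaining vertical distance further would increase the planar distance by the factor 1/t > 1 and hence the total length. -/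
/-!
The map `z ↦ √(ρ² + z²)` is 1-Lipschitz, while the linear part has slope `-√(1 + t²)/t < -1`,
so the linear part wins.
-/

open Real

lemma lipschitzWith_one_sqrt_add_sq {c : ℝ} (hc : 0 ≤ c) :
    LipschitzWith 1 fun z : ℝ => √(c + z ^ 2) := by
  refine LipschitzWith.of_le_add fun x y => ?_
  have hy : |y| ≤ √(c + y ^ 2) := abs_le_sqrt (by linarith)
  have hsq : √(c + y ^ 2) ^ 2 = c + y ^ 2 := sq_sqrt (by positivity)
  -- `x² - y² - (x - y)² = 2y(x - y) ≤ 2|y||x - y| ≤ 2√(c + y²)|x - y|`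
  have hcross : y * (x - y) ≤ √(c + y ^ 2) * |x - y| :=
    (le_abs_self _).trans <| (abs_mul y (x - y)).trans_le <|
      mul_le_mul_of_nonneg_right hy (abs_nonneg _)
  rw [dist_eq, sqrt_le_iff]
  exact ⟨by positivity, by nlinarith [sq_abs (x - y)]⟩

lemma strictAnti_add_sub_mul_of_lipschitzWith {f : ℝ → ℝ} {K : NNReal} {k : ℝ}
    (hf : LipschitzWith K f) (hK : (K : ℝ) < k) (D : ℝ) :
    StrictAnti fun z => f z + (D - z) * k := by
  intro a b hab
  have hf_ba : f b ≤ f a + K * (b - a) := by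
    simpa [dist_eq, abs_of_pos (sub_pos.2 hab)] using hf.le_add_mul b a
  have : (K : ℝ) * (b - a) < k * (b - a) := mul_lt_mul_of_pos_right hK (sub_pos.2 hab)
  dsimp only
  linarith

lemma one_lt_sqrt_one_add_sq_div {t : ℝ} (ht : 0 < t) : 1 < √(1 + t ^ 2) / t := by
  rw [one_lt_div ht, lt_sqrt ht.le]
  linarith

theorem stmt_11_general (t ρ D : ℝ) (ht : 0 < t) :
    StrictAnti (fun z : ℝ =>
      Real.sqrt (ρ ^ 2 + z ^ 2) + (D - z) * Real.sqrt (1 + t ^ 2) / t) ∧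
    1 < Real.sqrt (1 + t ^ 2) / t := by
  have hslope := one_lt_sqrt_one_add_sq_div ht
  refine ⟨?_, hslope⟩
  simp only [mul_div_assoc]
  exact strictAnti_add_sub_mul_of_lipschitzWith (lipschitzWith_one_sqrt_add_sq (sq_nonneg ρ))
    (by simpa using hslope) D

theorem stmt_11 (t ρ D : ℝ) (ht : 0 < t) (hρ : 0 ≤ ρ) :
    StrictAnti (fun z : ℝ =>
      Real.sqrt (ρ ^ 2 + z ^ 2) + (D - z) * Real.sqrt (1 + t ^ 2) / t) ∧
    1 < Real.sqrt (1 + t ^ 2) / t :=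
  stmt_11_general t ρ D ht
end
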